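/- Let C be a real m×n matrix, F a real n×n matrix, ε > 0, and γ > 0 such that F + Fᵀ − γI is positive definite. Then the quadratic form Q(λ, φ) = (1/2)‖Cλ‖² + (1/ε)(λᵀφ + (1/(2γ))‖Fλ − φ‖²) on ℝⁿ × ℝⁿ is positive definite: Q(λ, φ) > 0 for every (λ, φ) ≠ (0, 0). -/
import Mathlib


open Matrix

lemma dot_self_nonneg' {n : ℕ} (v : Fin n → ℝ) : 0 ≤ v ⬝ᵥ v :=
  Finset.sum_nonneg fun i _ => mul_self_nonneg (v i)

lemma dot_self_pos' {n : ℕ} {v : Fin n → ℝ} (hv : v ≠ 0) : 0 < v ⬝ᵥ v :=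
  lt_of_le_of_ne (dot_self_nonneg' v) fun h => hv (dotProduct_self_eq_zero.mp h.symm)

/-- Claim (a) of Lemma 3: the quadratic part of the per-sample violation-based loss,
`Q(λ, φ) = (1/2)‖Cλ‖² + (1/ε)(λᵀφ + (1/(2γ))‖Fλ - φ‖²)`, is positive definite. -/
theorem violation_loss_quadratic_part_posdef {m n : ℕ}
    (C : Matrix (Fin m) (Fin n) ℝ) (F : Matrix (Fin n) (Fin n) ℝ)
    (ε γ : ℝ) (hε : 0 < ε) (hγ : 0 < γ)
    (hγF : ∀ v : Fin n → ℝ, v ≠ 0 →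
      0 < v ⬝ᵥ (F + Fᵀ - γ • (1 : Matrix (Fin n) (Fin n) ℝ)).mulVec v)
    (lam phi : Fin n → ℝ) (h : ¬(lam = 0 ∧ phi = 0)) :
    0 < (1 / 2) * (C.mulVec lam ⬝ᵥ C.mulVec lam) +
      (1 / ε) * (lam ⬝ᵥ phi +
        (1 / (2 * γ)) * ((F.mulVec lam - phi) ⬝ᵥ (F.mulVec lam - phi))) := by
  set u : Fin n → ℝ := phi - F.mulVec lam + γ • lam with hu
  have ht : lam ⬝ᵥ Fᵀ.mulVec lam = lam ⬝ᵥ F.mulVec lam := by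
    rw [dotProduct_mulVec, vecMul_transpose, dotProduct_comm]
  have hc : phi ⬝ᵥ F.mulVec lam = F.mulVec lam ⬝ᵥ phi := dotProduct_comm _ _
  have hc2 : lam ⬝ᵥ F.mulVec lam = F.mulVec lam ⬝ᵥ lam := dotProduct_comm _ _
  have hc3 : lam ⬝ᵥ phi = phi ⬝ᵥ lam := dotProduct_comm _ _
  have key : lam ⬝ᵥ phi +
      (1 / (2 * γ)) * ((F.mulVec lam - phi) ⬝ᵥ (F.mulVec lam - phi)) =
      (1 / (2 * γ)) * (u ⬝ᵥ u) +
      (1 / 2) * (lam ⬝ᵥ (F + Fᵀ - γ • (1 : Matrix (Fin n) (Fin n) ℝ)).mulVec lam) := by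
    simp only [hu, Matrix.sub_mulVec, Matrix.add_mulVec, Matrix.smul_mulVec,
      Matrix.one_mulVec, dotProduct_add, add_dotProduct, dotProduct_sub, sub_dotProduct,
      dotProduct_smul, smul_dotProduct, smul_eq_mul, ht, hc, hc2, hc3]
    field_simp
    ring
  rw [key]
  have hCd : 0 ≤ C.mulVec lam ⬝ᵥ C.mulVec lam := dot_self_nonneg' _
  have hud : 0 ≤ u ⬝ᵥ u := dot_self_nonneg' _
  by_cases hl : lam = 0
  · have hphi : phi ≠ 0 := fun hp => h ⟨hl, hp⟩
    have hune : u ≠ 0 := by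
      simpa [hu, hl] using hphi
    have := dot_self_pos' hune
    have hM : lam ⬝ᵥ (F + Fᵀ - γ • (1 : Matrix (Fin n) (Fin n) ℝ)).mulVec lam = 0 := by
      simp [hl]
    rw [hM]
    have : 0 < (1 / (2 * γ)) * (u ⬝ᵥ u) := by positivity
    have h2 : 0 < (1 / ε) * ((1 / (2 * γ)) * (u ⬝ᵥ u) + (1 / 2) * (0:ℝ)) := by
      rw [mul_zero, add_zero]; positivity
    nlinarith
  · have hM := hγF lam hl
    have h2 : 0 < (1 / ε) * ((1 / (2 * γ)) * (u ⬝ᵥ u) +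
        (1 / 2) * (lam ⬝ᵥ (F + Fᵀ - γ • (1 : Matrix (Fin n) (Fin n) ℝ)).mulVec lam)) := by
      have : 0 < (1 / (2 * γ)) * (u ⬝ᵥ u) +
          (1 / 2) * (lam ⬝ᵥ (F + Fᵀ - γ • (1 : Matrix (Fin n) (Fin n) ℝ)).mulVec lam) := by
        have h1 : 0 ≤ (1 / (2 * γ)) * (u ⬝ᵥ u) := by positivity
        nlinarith
      positivity
    nlinarith
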